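/- arXiv:1401.2761 — 5 statements merged into one kernel-verified Lean document; each statement's English description precedes it below -/
import Mathlib

section
/- Let R be a commutative ring, T = T(R), H = R^• the monoid of regular elements of R, Q = q(H) = T^• the group of regular elements of T, and M ⊆ T an R-submodule. For any subset Y ⊆ T, the set of regular elements of (M : ⟨Y^•⟩_R) equals (M^• : Y^•) computed in Q, where ⟨Y^•⟩_R is the R-submodule generated by the regular elements of Y; moreover (M : ⟨Y^•⟩_R) = (M : Y^•). -/
open scoped Pointwise

/-- For subsets `Z, X` of the total quotient ring `T`, the colon set
`(Z : X) = {a ∈ T | a X ⊆ Z}`. -/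
def colonSet (T : Type*) [CommRing T] (Z X : Set T) : Set T :=
  {a : T | ∀ x ∈ X, a * x ∈ Z}

/-- The image of `R` inside its total quotient ring `T`. -/
def ringSet (R T : Type*) [CommRing R] [CommRing T] [Algebra R T] : Set T :=
  Set.range (algebraMap R T)

/-- `X⁻¹ = (R : X)` for a subset `X ⊆ T`. -/
def invSet (R T : Type*) [CommRing R] [CommRing T] [Algebra R T] (X : Set T) : Set T :=
  colonSet T (ringSet R T) X

/-- The divisorial (v-) closure `X_v = (X⁻¹)⁻¹` of a subset `X ⊆ T`. -/
def vSet (R T : Type*) [CommRing R] [CommRing T] [Algebra R T] (X : Set T) : Set T :=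
  invSet R T (invSet R T X)

/-- The set of regular elements (non-zero-divisors) of `T`. -/
def regSet (T : Type*) [CommRing T] : Set T :=
  {t : T | t ∈ nonZeroDivisors T}

/-- The colon set computed inside `Q = T^• ` : `(Z :_Q X) = {a ∈ Q | a X ⊆ Z}`. -/
def colonQ (T : Type*) [CommRing T] (Z X : Set T) : Set T :=
  {a : T | a ∈ nonZeroDivisors T ∧ ∀ x ∈ X, a * x ∈ Z}

/-- The monoid `H = R^•` of regular elements of `R`, viewed inside `T`. -/
def HSet (R T : Type*) [CommRing R] [CommRing T] [Algebra R T] : Set T :=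
  ringSet R T ∩ regSet T

/-- The v-closure of a subset of `Q = T^•` with respect to the monoid `H = R^•`. -/
def vMon (R T : Type*) [CommRing R] [CommRing T] [Algebra R T] (X : Set T) : Set T :=
  colonQ T (HSet R T) (colonQ T (HSet R T) X)

/-- `X ⊆ T` is `R`-fractional: `cX ⊆ R` for some regular `c ∈ R^•`. -/
def isFrac (R T : Type*) [CommRing R] [CommRing T] [Algebra R T] (X : Set T) : Prop :=
  ∃ c : R, c ∈ nonZeroDivisors R ∧ ∀ x ∈ X, algebraMap R T c * x ∈ ringSet R T

/-- The complete integral closure `R̂` of `R` in `T`. -/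
def hatSet (R T : Type*) [CommRing R] [CommRing T] [Algebra R T] : Set T :=
  {x : T | ∃ c : R, c ∈ nonZeroDivisors R ∧
    ∀ n : ℕ, 1 ≤ n → algebraMap R T c * x ^ n ∈ ringSet R T}

/-- The complete integral closure `Ĥ` of the monoid `H = R^•` in `q(H) = T^•`. -/
def monHat (R T : Type*) [CommRing R] [CommRing T] [Algebra R T] : Set T :=
  {x : T | x ∈ nonZeroDivisors T ∧
    ∃ c ∈ HSet R T, ∀ n : ℕ, 1 ≤ n → c * x ^ n ∈ HSet R T}

/-- `R` is a v-Marot ring: every regular fractional divisorial ideal is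
v-generated by its regular elements. -/
def isVMarot (R T : Type*) [CommRing R] [CommRing T] [Algebra R T] : Prop :=
  ∀ I : Set T, (I ∩ regSet T).Nonempty → isFrac R T I → vSet R T I = I →
    I = vSet R T (I ∩ regSet T)

/-- `a ⟨X⟩ ⊆ M` iff `⟨X⟩` lies in the submodule `{x | a x ∈ M}`, i.e. iff `X` does. -/
theorem colonSet_span {R T : Type*} [CommRing R] [CommRing T] [Algebra R T]
    (M : Submodule R T) (X : Set T) :
    colonSet T M (Submodule.span R X) = colonSet T M X := by
  ext a
  exact Submodule.span_le (p := M.comap (LinearMap.mulLeft R a))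

theorem colonSet_inter_regSet {T : Type*} [CommRing T] {Z X : Set T} (hX : X ⊆ regSet T) :
    colonSet T Z X ∩ regSet T = colonQ T (Z ∩ regSet T) X := by
  ext a
  constructor
  · rintro ⟨ha, ha_reg⟩
    exact ⟨ha_reg, fun x hx => ⟨ha x hx, show a * x ∈ nonZeroDivisors T from mul_mem ha_reg (hX hx)⟩⟩
  · rintro ⟨ha_reg, ha⟩
    exact ⟨fun x hx => (ha x hx).1, ha_reg⟩

theorem stmt6_general (R T : Type*) [CommRing R] [CommRing T] [Algebra R T]
    (M : Submodule R T) (Y : Set T) :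
    colonSet T (M : Set T) (Submodule.span R (Y ∩ regSet T) : Set T) ∩ regSet T =
        colonQ T ((M : Set T) ∩ regSet T) (Y ∩ regSet T) ∧
      colonSet T (M : Set T) (Submodule.span R (Y ∩ regSet T) : Set T) =
        colonSet T (M : Set T) (Y ∩ regSet T) := by
  rw [colonSet_span]
  exact ⟨colonSet_inter_regSet Set.inter_subset_right, rfl⟩

theorem stmt6 (R T : Type*) [CommRing R] [CommRing T] [Algebra R T] [IsFractionRing R T]
    (M : Submodule R T) (Y : Set T) :
    colonSet T (M : Set T) (Submodule.span R (Y ∩ regSet T) : Set T) ∩ regSet T =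
        colonQ T ((M : Set T) ∩ regSet T) (Y ∩ regSet T) ∧
      colonSet T (M : Set T) (Submodule.span R (Y ∩ regSet T) : Set T) =
        colonSet T (M : Set T) (Y ∩ regSet T) :=
  stmt6_general R T M Y
end

section
/- Let R be a commutative ring with total quotient ring T and let E ⊆ R̂ be a finite subset of the complete integral closure of R in T. Then E_v ⊆ R̂, where E_v is the divisorial closure of E with respect to R. -/
open scoped Pointwise

/-!
The monomials in the finitely many elements of `E` admit a common denominator `c ∈ R^•`, i.e.
`c ∈ ⟨E⟩⁻¹` for the monoid `⟨E⟩` they generate: multiply the denominators of the single elements.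
Multiplication by any `x ∈ E_v` preserves `⟨E⟩⁻¹`, because `y ∈ ⟨E⟩⁻¹` gives `y m ∈ E⁻¹` for every
`m ∈ ⟨E⟩`. Hence `c xⁿ ∈ ⟨E⟩⁻¹`, and evaluating at `1 ∈ ⟨E⟩` gives `c xⁿ ∈ R` for all `n`.
-/

section

variable {R T : Type*} [CommRing R] [CommRing T] [Algebra R T]

lemma algebraMap_mem_ringSet (r : R) : algebraMap R T r ∈ ringSet R T := ⟨r, rfl⟩

lemma mul_mem_ringSet {a b : T} (ha : a ∈ ringSet R T) (hb : b ∈ ringSet R T) :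
    a * b ∈ ringSet R T := by
  obtain ⟨a, rfl⟩ := ha
  obtain ⟨b, rfl⟩ := hb
  exact ⟨a * b, map_mul _ a b⟩

lemma mem_hatSet_iff {x : T} :
    x ∈ hatSet R T ↔ ∃ c ∈ nonZeroDivisors R, ∀ n : ℕ, algebraMap R T c * x ^ n ∈ ringSet R T := by
  refine ⟨fun ⟨c, hc, hpow⟩ => ⟨c, hc, fun n => ?_⟩, fun ⟨c, hc, hpow⟩ => ⟨c, hc, fun n _ => hpow n⟩⟩
  rcases Nat.eq_zero_or_pos n with rfl | hn
  · simpa using algebraMap_mem_ringSet c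
  · exact hpow n hn

lemma exists_algebraMap_mem_invSet_closure {E : Set T} (hEfin : E.Finite) (hE : E ⊆ hatSet R T) :
    ∃ c ∈ nonZeroDivisors R, algebraMap R T c ∈ invSet R T (Submonoid.closure E) := by
  induction E, hEfin using Set.Finite.induction_on with
  | empty =>
    refine ⟨1, one_mem _, fun m hm => ?_⟩
    rw [SetLike.mem_coe, Submonoid.closure_empty, Submonoid.mem_bot] at hm
    simpa [hm] using algebraMap_mem_ringSet (T := T) (1 : R)
  | @insert a t _ _ ih =>
    obtain ⟨c, hc, hct⟩ := ih ((Set.subset_insert a t).trans hE)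
    obtain ⟨d, hd, hda⟩ := mem_hatSet_iff.1 (hE (Set.mem_insert a t))
    refine ⟨d * c, mul_mem hd hc, fun m hm => ?_⟩
    rw [SetLike.mem_coe, Set.insert_eq, Submonoid.closure_union, Submonoid.mem_sup] at hm
    obtain ⟨_, hpow, m, hm, rfl⟩ := hm
    obtain ⟨n, rfl⟩ := Submonoid.mem_closure_singleton.1 hpow
    have hsplit : algebraMap R T (d * c) * (a ^ n * m)
        = (algebraMap R T d * a ^ n) * (algebraMap R T c * m) := by
      rw [map_mul]; ring
    rw [hsplit]
    exact mul_mem_ringSet (hda n) (hct m hm)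

lemma mul_mem_invSet_closure_of_mem_vSet {E : Set T} {x y : T} (hx : x ∈ vSet R T E)
    (hy : y ∈ invSet R T (Submonoid.closure E)) : x * y ∈ invSet R T (Submonoid.closure E) := by
  intro m hm
  have hym : y * m ∈ invSet R T E := fun e he => by
    rw [mul_assoc]
    exact hy _ (mul_mem hm (Submonoid.subset_closure he))
  rw [mul_assoc]
  exact hx _ hym

lemma pow_mul_mem_invSet_closure_of_mem_vSet {E : Set T} {x y : T} (hx : x ∈ vSet R T E)
    (hy : y ∈ invSet R T (Submonoid.closure E)) (n : ℕ) :
    x ^ n * y ∈ invSet R T (Submonoid.closure E) := by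
  induction n with
  | zero => simpa using hy
  | succ n ih =>
    rw [pow_succ', mul_assoc]
    exact mul_mem_invSet_closure_of_mem_vSet hx ih

end

theorem stmt7_general (R T : Type*) [CommRing R] [CommRing T] [Algebra R T]
    (E : Set T) (hEfin : E.Finite) (hE : E ⊆ hatSet R T) :
    vSet R T E ⊆ hatSet R T := by
  intro x hx
  obtain ⟨c, hc, hcE⟩ := exists_algebraMap_mem_invSet_closure hEfin hE
  refine mem_hatSet_iff.2 ⟨c, hc, fun n => ?_⟩
  simpa [mul_comm] using pow_mul_mem_invSet_closure_of_mem_vSet hx hcE n 1 (one_mem _)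

theorem stmt7 (R T : Type*) [CommRing R] [CommRing T] [Algebra R T] [IsFractionRing R T]
    (E : Set T) (hEfin : E.Finite) (hE : E ⊆ hatSet R T) :
    vSet R T E ⊆ hatSet R T :=
  stmt7_general R T E hEfin hE
end

section
/- Let R be a commutative ring with total quotient ring T, R̂ its complete integral closure in T, and 𝔣 = (R : R̂) the conductor. Then (R̂)_v = (𝔣 : 𝔣). -/
/-
Since `R̂` is a multiplicative monoid containing `1`, the conductor `𝔣 = R̂⁻¹` satisfies
`𝔣 R̂ ⊆ 𝔣`. Hence any `a` with `a 𝔣 ⊆ R` already maps `𝔣` into `𝔣`, and conversely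
`a 𝔣 ⊆ 𝔣 ⊆ R` because `1 ∈ R̂`.
-/

open scoped Pointwise

section Colon

variable {T : Type*} [CommRing T]

theorem mul_mem_colonSet_of_mem_submonoid {Z : Set T} {M : Submonoid T} {f x : T}
    (hf : f ∈ colonSet T Z M) (hx : x ∈ M) : f * x ∈ colonSet T Z M := fun y hy => by
  simpa only [mul_assoc] using hf (x * y) (M.mul_mem hx hy)

theorem colonSet_colonSet_submonoid_eq (Z : Set T) (M : Submonoid T) :
    colonSet T Z (colonSet T Z M) = colonSet T (colonSet T Z M) (colonSet T Z M) := by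
  ext a
  constructor
  · intro ha f hf x hx
    simpa only [mul_assoc] using ha (f * x) (mul_mem_colonSet_of_mem_submonoid hf hx)
  · intro ha f hf
    simpa only [mul_one] using ha f hf 1 M.one_mem

end Colon

section CompleteIntegralClosure

variable (R T : Type*) [CommRing R] [CommRing T] [Algebra R T]

def hatSubmonoid : Submonoid T where
  carrier := hatSet R T
  one_mem' := ⟨1, one_mem _, fun _ _ => ⟨1, by simp⟩⟩
  mul_mem' := by
    rintro x y ⟨c, hc, hcx⟩ ⟨d, hd, hdy⟩
    refine ⟨c * d, mul_mem hc hd, fun n hn => ?_⟩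
    obtain ⟨r, hr⟩ := hcx n hn
    obtain ⟨s, hs⟩ := hdy n hn
    exact ⟨r * s, by rw [map_mul, map_mul, hr, hs, mul_pow]; ring⟩

end CompleteIntegralClosure

theorem stmt8_general (R T : Type*) [CommRing R] [CommRing T] [Algebra R T] :
    vSet R T (hatSet R T) =
      colonSet T (colonSet T (ringSet R T) (hatSet R T))
        (colonSet T (ringSet R T) (hatSet R T)) :=
  colonSet_colonSet_submonoid_eq (ringSet R T) (hatSubmonoid R T)

theorem stmt8 (R T : Type*) [CommRing R] [CommRing T] [Algebra R T] [IsFractionRing R T] :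
    vSet R T (hatSet R T) =
      colonSet T (colonSet T (ringSet R T) (hatSet R T))
        (colonSet T (ringSet R T) (hatSet R T)) :=
  stmt8_general R T
end

section
/- For a commutative ring R the following are equivalent: (a) every regular divisorial ideal I of R satisfies I = (I^•)_v, i.e., is v-generated by its regular elements; (b) every regular fractional divisorial ideal I of R satisfies I = (I^•)_v; (c) every regular fractional divisorial ideal I of R equals the intersection of all fractional principal ideals zR with z ∈ T(R)^• and zR ⊇ I. -/
open scoped Pointwise

/-! Multiplication by a unit of `T` commutes with `X ↦ X⁻¹`, `X ↦ X_v` and `X ↦ X^•`, and moves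
any regular fractional set into `R`; this gives (a) ⇔ (b). In the total quotient ring every
regular element is a unit, and `I ⊆ zR` iff `z⁻¹ ∈ (I⁻¹)^•`, so the intersection in (c) is
`((I⁻¹)^•)⁻¹`. As `I ↦ I⁻¹` is an involution on regular fractional divisorial sets and
`(((I⁻¹)^•)_v)⁻¹ = ((I⁻¹)^•)⁻¹`, condition (b) for `I⁻¹` is exactly condition (c) for `I`. -/

section Divisorial

variable {R T : Type*} [CommRing R] [CommRing T] [Algebra R T]

lemma invSet_anti {X Y : Set T} (h : X ⊆ Y) : invSet R T Y ⊆ invSet R T X :=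
  fun _ ha x hx => ha x (h hx)

lemma subset_vSet (X : Set T) : X ⊆ vSet R T X :=
  fun x hx _ ha => mul_comm x _ ▸ ha x hx

lemma invSet_vSet (X : Set T) : invSet R T (vSet R T X) = invSet R T X :=
  (invSet_anti (subset_vSet X)).antisymm (subset_vSet _)

lemma vSet_invSet (X : Set T) : vSet R T (invSet R T X) = invSet R T X :=
  invSet_vSet X

lemma invSet_eq_vSet_inter_regSet_iff {I : Set T} (hI : vSet R T I = I) :
    invSet R T I = vSet R T (invSet R T I ∩ regSet T) ↔
      I = invSet R T (invSet R T I ∩ regSet T) :=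
  ⟨fun h => hI.symm.trans ((congrArg (invSet R T) h).trans (invSet_vSet _)),
    fun h => congrArg (invSet R T) h⟩

lemma invSet_units_smul (u : Tˣ) (X : Set T) :
    invSet R T (u • X) = u⁻¹ • invSet R T X := by
  ext a
  rw [Set.mem_smul_set_iff_inv_smul_mem, inv_inv]
  have h (x : T) : a * (u • x) = u • a * x := by simp only [Units.smul_def, smul_eq_mul]; ring
  constructor
  · exact fun ha x hx => h x ▸ ha _ (Set.smul_mem_smul_set hx)
  · rintro ha _ ⟨x, hx, rfl⟩
    exact (h x).symm ▸ ha x hx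

lemma vSet_units_smul (u : Tˣ) (X : Set T) : vSet R T (u • X) = u • vSet R T X := by
  simp only [vSet, invSet_units_smul, inv_inv]

lemma units_smul_regSet (u : Tˣ) : u • regSet T = regSet T := by
  ext x
  rw [Set.mem_smul_set_iff_inv_smul_mem, Units.smul_def]
  exact mul_mem_nonZeroDivisors.trans (and_iff_right u⁻¹.isUnit.mem_nonZeroDivisors)

lemma units_smul_inter_regSet (u : Tˣ) (X : Set T) :
    u • X ∩ regSet T = u • (X ∩ regSet T) := by
  rw [Set.smul_set_inter, units_smul_regSet]

lemma units_smul_eq_vSet_inter_regSet_iff (u : Tˣ) {I : Set T} :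
    u • I = vSet R T (u • I ∩ regSet T) ↔ I = vSet R T (I ∩ regSet T) := by
  rw [units_smul_inter_regSet, vSet_units_smul, smul_left_cancel_iff]

lemma mem_units_smul_ringSet_iff (u : Tˣ) (x : T) :
    x ∈ (u : T) • ringSet R T ↔ ↑u⁻¹ * x ∈ ringSet R T :=
  Set.mem_smul_set_iff_inv_smul_mem (a := u)

lemma subset_units_smul_ringSet_iff (u : Tˣ) (X : Set T) :
    X ⊆ (u : T) • ringSet R T ↔ (↑u⁻¹ : T) ∈ invSet R T X := by
  simp [Set.subset_def, mem_units_smul_ringSet_iff, invSet, colonSet]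

lemma isFrac_of_subset_ringSet {X : Set T} (h : X ⊆ ringSet R T) : isFrac R T X :=
  ⟨1, one_mem _, fun x hx => by simpa using h hx⟩

end Divisorial

section FractionRing

variable {R T : Type*} [CommRing R] [CommRing T] [Algebra R T] [IsFractionRing R T]

include R in
lemma isUnit_of_mem_regSet {t : T} (ht : t ∈ regSet T) : IsUnit t := by
  rwa [regSet, Set.mem_ofPred_eq, IsFractionRing.nonZeroDivisors_eq_isUnit R T] at ht

lemma isFrac_invSet {X : Set T} (h : (X ∩ regSet T).Nonempty) : isFrac R T (invSet R T X) := by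
  obtain ⟨x, hxX, hx⟩ := h
  obtain ⟨⟨r, s⟩, hrs⟩ := IsLocalization.surj (nonZeroDivisors R) x
  refine ⟨r, mem_nonZeroDivisors_of_injective (IsFractionRing.injective R T)
    (hrs ▸ mul_mem hx (IsLocalization.map_units T s).mem_nonZeroDivisors), fun a ha => ?_⟩
  obtain ⟨b, hb⟩ := ha x hxX
  exact ⟨s * b, by rw [map_mul, hb, ← hrs]; ring⟩

lemma invSet_inter_regSet_nonempty {X : Set T} (h : isFrac R T X) :
    (invSet R T X ∩ regSet T).Nonempty := by
  obtain ⟨c, hc, hcX⟩ := h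
  exact ⟨algebraMap R T c, hcX, (IsLocalization.map_units T ⟨c, hc⟩).mem_nonZeroDivisors⟩

lemma isFrac.exists_units_smul_subset_ringSet {X : Set T} (h : isFrac R T X) :
    ∃ u : Tˣ, u • X ⊆ ringSet R T := by
  obtain ⟨c, hc, hcX⟩ := h
  exact ⟨(IsLocalization.map_units T ⟨c, hc⟩).unit, Set.smul_set_subset_iff.2 hcX⟩

lemma sInter_smul_ringSet_eq_invSet (I : Set T) :
    ⋂₀ {J : Set T | ∃ z ∈ nonZeroDivisors T, J = z • ringSet R T ∧ I ⊆ J} =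
      invSet R T (invSet R T I ∩ regSet T) := by
  ext b
  simp only [Set.mem_sInter, Set.mem_ofPred_eq]
  constructor
  · rintro hb w ⟨hwI, hw⟩
    obtain ⟨u, rfl⟩ := isUnit_of_mem_regSet (R := R) hw
    have := hb _ ⟨↑u⁻¹, u⁻¹.isUnit.mem_nonZeroDivisors, rfl,
      (subset_units_smul_ringSet_iff u⁻¹ I).2 (by simpa using hwI)⟩
    simpa [mul_comm] using (mem_units_smul_ringSet_iff _ _).1 this
  · rintro hb _ ⟨z, hz, rfl, hIz⟩
    obtain ⟨u, rfl⟩ := isUnit_of_mem_regSet (R := R) hz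
    rw [mem_units_smul_ringSet_iff, mul_comm]
    exact hb _ ⟨(subset_units_smul_ringSet_iff u I).1 hIz, u⁻¹.isUnit.mem_nonZeroDivisors⟩

end FractionRing

theorem stmt10 (R T : Type*) [CommRing R] [CommRing T] [Algebra R T] [IsFractionRing R T] :
    ((∀ I : Set T, I ⊆ ringSet R T → (I ∩ regSet T).Nonempty → vSet R T I = I →
        I = vSet R T (I ∩ regSet T)) ↔
      (∀ I : Set T, (I ∩ regSet T).Nonempty → isFrac R T I → vSet R T I = I →
        I = vSet R T (I ∩ regSet T))) ∧
    ((∀ I : Set T, (I ∩ regSet T).Nonempty → isFrac R T I → vSet R T I = I →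
        I = vSet R T (I ∩ regSet T)) ↔
      (∀ I : Set T, (I ∩ regSet T).Nonempty → isFrac R T I → vSet R T I = I →
        I = ⋂₀ {J : Set T | ∃ z ∈ nonZeroDivisors T, J = z • ringSet R T ∧ I ⊆ J})) := by
  simp only [sInter_smul_ringSet_eq_invSet]
  refine ⟨⟨fun ha I hreg hfrac hI => ?_,
      fun hb I hR hreg hI => hb I hreg (isFrac_of_subset_ringSet hR) hI⟩,
    ⟨fun hb I hreg hfrac hI => ?_, fun hc I hreg hfrac hI => ?_⟩⟩
  · obtain ⟨u, hu⟩ := hfrac.exists_units_smul_subset_ringSet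
    rw [← units_smul_eq_vSet_inter_regSet_iff u]
    refine ha _ hu ?_ (by rw [vSet_units_smul, hI])
    rw [units_smul_inter_regSet]
    exact hreg.smul_set
  · exact (invSet_eq_vSet_inter_regSet_iff hI).1
      (hb _ (invSet_inter_regSet_nonempty hfrac) (isFrac_invSet hreg) (vSet_invSet I))
  · have := (invSet_eq_vSet_inter_regSet_iff (vSet_invSet I)).2
      (hc _ (invSet_inter_regSet_nonempty hfrac) (isFrac_invSet hreg) (vSet_invSet I))
    change vSet R T I = vSet R T (vSet R T I ∩ regSet T) at this
    rwa [hI] at this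
end

section
/- Let R be a commutative ring with total quotient ring T and let I be a regular fractional divisorial ideal of R. Then I is v-invertible (i.e., (I·I^{-1})_v = R) if and only if (I :_T I) = R. -/
open scoped Pointwise

/-!
Since `b (I I⁻¹) ⊆ R` iff `b I ⊆ I_v = I`, one has `(I I⁻¹)⁻¹ = (I :_T I)`, so
`(I I⁻¹)_v = (I :_T I)⁻¹`. The set `J = (I :_T I)` contains `R`, because `I = (I⁻¹)⁻¹` is an
`R`-module; hence `J⁻¹ ⊆ R`, and `1 ∈ J⁻¹` exactly when `J ⊆ R`, so `J⁻¹ = R` iff `J = R`.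
-/

section

variable {R T : Type*} [CommRing R] [CommRing T] [Algebra R T]

lemma one_mem_ringSet : (1 : T) ∈ ringSet R T := ⟨1, map_one _⟩

lemma one_mem_invSet_iff {X : Set T} : (1 : T) ∈ invSet R T X ↔ X ⊆ ringSet R T := by
  simp only [invSet, colonSet, Set.mem_ofPred_eq, one_mul, Set.subset_def]

lemma invSet_ringSet : invSet R T (ringSet R T) = ringSet R T := by
  ext b
  refine ⟨fun hb => by simpa using hb 1 one_mem_ringSet, fun hb x hx => mul_mem_ringSet hb hx⟩

lemma ringSet_subset_colonSet_invSet (X : Set T) :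
    ringSet R T ⊆ colonSet T (invSet R T X) (invSet R T X) := by
  intro r hr a ha x hx
  rw [mul_assoc]
  exact mul_mem_ringSet hr (ha x hx)

lemma invSet_mul (X Y : Set T) :
    invSet R T (X * Y) = colonSet T (invSet R T Y) X := by
  ext b
  simp only [invSet, colonSet, Set.mem_ofPred_eq, ← Set.image2_mul, Set.forall_mem_image2, mul_assoc]

lemma invSet_eq_ringSet_iff {J : Set T} (hJ : ringSet R T ⊆ J) :
    invSet R T J = ringSet R T ↔ J = ringSet R T := by
  refine ⟨fun h => hJ.antisymm' ?_, fun h => by rw [h, invSet_ringSet]⟩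
  rw [← one_mem_invSet_iff, h]
  exact one_mem_ringSet

end

theorem stmt17_general (R T : Type*) [CommRing R] [CommRing T] [Algebra R T]
    (I : Set T)
    (hdiv : vSet R T I = I) :
    vSet R T (I * invSet R T I) = ringSet R T ↔ colonSet T I I = ringSet R T := by
  have hR : ringSet R T ⊆ colonSet T I I := hdiv ▸ ringSet_subset_colonSet_invSet _
  rw [vSet, invSet_mul, ← vSet, hdiv]
  exact invSet_eq_ringSet_iff hR

theorem stmt17 (R T : Type*) [CommRing R] [CommRing T] [Algebra R T] [IsFractionRing R T]
    (I : Set T) (hreg : (I ∩ regSet T).Nonempty) (hfrac : isFrac R T I)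
    (hdiv : vSet R T I = I) :
    vSet R T (I * invSet R T I) = ringSet R T ↔ colonSet T I I = ringSet R T :=
  stmt17_general R T I hdiv
end
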